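/- Let d be a positive integer, μ ∈ [0,1), τ a positive integer, and let (g_q)_{q=0}^{τ−1} be vectors in ℝ^d. Define v_0 = 0 and v_{s+1} = μ v_s + g_s for s = 0,…,τ−1. Then Σ_{u=0}^{τ−1} ‖v_{u+1}‖² ≤ (τ/(1−μ²)) Σ_{q=0}^{τ−1} ‖g_q‖², where ‖·‖ is the Euclidean norm. -/
import Mathlib


open Finset

lemma stmt_8_geom_bound {r : ℝ} (h0 : 0 ≤ r) (h1 : r < 1) (n : ℕ) :
    ∑ k ∈ Finset.range n, r ^ k ≤ 1 / (1 - r) := by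
  have h2 : 0 < 1 - r := by linarith
  rw [le_div_iff₀ h2]
  nlinarith [geom_sum_mul r n, pow_nonneg h0 n]

/-- **Bounding the momentum norms by the gradient norms.**
Let `d ≥ 1`, `μ ∈ [0,1)`, `τ ≥ 1`, and let `(g_q)_{q=0}^{τ−1}` be vectors in `ℝ^d`
(Euclidean space).  Define `v_0 = 0` and `v_{s+1} = μ v_s + g_s` for `s = 0,…,τ−1`.
Then `Σ_{u=0}^{τ−1} ‖v_{u+1}‖² ≤ (τ/(1−μ²)) Σ_{q=0}^{τ−1} ‖g_q‖²`, where `‖·‖` is the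
Euclidean norm. -/
theorem stmt_8 (d : ℕ) (hd : 0 < d) (μm : ℝ) (hμ0 : 0 ≤ μm) (hμ1 : μm < 1)
    (τ : ℕ) (hτ : 0 < τ)
    (g : ℕ → EuclideanSpace ℝ (Fin d)) (v : ℕ → EuclideanSpace ℝ (Fin d))
    (hv0 : v 0 = 0)
    (hvrec : ∀ s, s < τ → v (s + 1) = μm • v s + g s) :
    ∑ u ∈ Finset.range τ, ‖v (u + 1)‖ ^ 2
      ≤ ((τ : ℝ) / (1 - μm ^ 2)) * ∑ q ∈ Finset.range τ, ‖g q‖ ^ 2 := by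
  have hμ2 : μm ^ 2 < 1 := by nlinarith
  have hμ2' : 0 < 1 - μm ^ 2 := by linarith
  -- closed form for v
  have hform : ∀ u, u < τ → v (u + 1) = ∑ q ∈ Finset.range (u + 1), μm ^ (u - q) • g q := by
    intro u hu
    induction u with
    | zero => simp [hvrec 0 hu, hv0]
    | succ n ih =>
      rw [hvrec (n + 1) hu, ih (by omega), Finset.smul_sum]
      rw [Finset.sum_range_succ (fun q => μm ^ (n + 1 - q) • g q)]
      have h : ∀ q ∈ Finset.range (n + 1), μm • μm ^ (n - q) • g q = μm ^ (n + 1 - q) • g q := by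
        intro q hq
        rw [Finset.mem_range] at hq
        rw [smul_smul, show n + 1 - q = (n - q) + 1 from by omega, pow_succ']
      rw [Finset.sum_congr rfl h, Nat.sub_self, pow_zero, one_smul]
  -- pointwise bound
  have hpt : ∀ u, u < τ → ‖v (u + 1)‖ ^ 2
      ≤ (τ : ℝ) * ∑ q ∈ Finset.range (u + 1), (μm ^ 2) ^ (u - q) * ‖g q‖ ^ 2 := by
    intro u hu
    have h1 : ‖v (u + 1)‖ ≤ ∑ q ∈ Finset.range (u + 1), μm ^ (u - q) * ‖g q‖ := by
      rw [hform u hu]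
      refine (norm_sum_le _ _).trans ?_
      apply Finset.sum_le_sum
      intro q _
      rw [norm_smul, Real.norm_eq_abs, abs_of_nonneg (pow_nonneg hμ0 _)]
    have h2 : ‖v (u + 1)‖ ^ 2 ≤ (∑ q ∈ Finset.range (u + 1), μm ^ (u - q) * ‖g q‖) ^ 2 :=
      pow_le_pow_left₀ (norm_nonneg _) h1 2
    refine h2.trans ?_
    have h3 := sq_sum_le_card_mul_sum_sq (s := Finset.range (u + 1))
      (f := fun q => μm ^ (u - q) * ‖g q‖)
    simp only [Finset.card_range] at h3
    refine h3.trans ?_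
    have hconv : ∀ q ∈ Finset.range (u + 1),
        (μm ^ (u - q) * ‖g q‖) ^ 2 = (μm ^ 2) ^ (u - q) * ‖g q‖ ^ 2 := by
      intro q _
      rw [mul_pow, ← pow_mul, ← pow_mul, Nat.mul_comm]
    rw [Finset.sum_congr rfl hconv]
    apply mul_le_mul_of_nonneg_right
    · exact_mod_cast Nat.succ_le_of_lt hu
    · apply Finset.sum_nonneg
      intro q _
      positivity
  calc ∑ u ∈ Finset.range τ, ‖v (u + 1)‖ ^ 2
      ≤ ∑ u ∈ Finset.range τ, (τ : ℝ) * ∑ q ∈ Finset.range (u + 1), (μm ^ 2) ^ (u - q) * ‖g q‖ ^ 2 := by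
        apply Finset.sum_le_sum
        intro u hu
        exact hpt u (Finset.mem_range.mp hu)
    _ = (τ : ℝ) * ∑ u ∈ Finset.range τ, ∑ q ∈ Finset.range (u + 1), (μm ^ 2) ^ (u - q) * ‖g q‖ ^ 2 := by
        rw [Finset.mul_sum]
    _ = (τ : ℝ) * ∑ q ∈ Finset.range τ, ∑ u ∈ Finset.Ico q τ, (μm ^ 2) ^ (u - q) * ‖g q‖ ^ 2 := by
        congr 1
        simp only [Finset.range_eq_Ico]
        exact (Finset.sum_Ico_Ico_comm 0 τ fun q u => (μm ^ 2) ^ (u - q) * ‖g q‖ ^ 2).symm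
    _ ≤ (τ : ℝ) * ∑ q ∈ Finset.range τ, (1 / (1 - μm ^ 2)) * ‖g q‖ ^ 2 := by
        apply mul_le_mul_of_nonneg_left _ (Nat.cast_nonneg τ)
        apply Finset.sum_le_sum
        intro q hq
        rw [Finset.mem_range] at hq
        have : ∑ u ∈ Finset.Ico q τ, (μm ^ 2) ^ (u - q) * ‖g q‖ ^ 2
            = (∑ k ∈ Finset.range (τ - q), (μm ^ 2) ^ k) * ‖g q‖ ^ 2 := by
          rw [Finset.sum_mul]
          rw [Finset.sum_Ico_eq_sum_range]
          apply Finset.sum_congr rfl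
          intro k _
          congr 2
          omega
        rw [this]
        apply mul_le_mul_of_nonneg_right _ (by positivity)
        exact stmt_8_geom_bound (by positivity) hμ2 _
    _ = ((τ : ℝ) / (1 - μm ^ 2)) * ∑ q ∈ Finset.range τ, ‖g q‖ ^ 2 := by
        rw [← Finset.mul_sum]
        ring
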